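/- Consider the simplified coevolutionary model (A = W, α = 0, γ = 0) with homogeneous λ, β ∈ (0,1), W symmetric, irreducible, row-stochastic with w_{ii} > 0 for all i. Suppose there exists a partition (V_p, V_n) of the agent set into two nonempty disjoint sets, and define d̲_p = min_{i∈V_p} Σ_{j∈V_p} w_{ij}, d̄_p = max_{i∈V_p} Σ_{j∈V_p} w_{ij}, d̲_n = min_{i∈V_n} Σ_{j∈V_n} w_{ij}, d̄_n = max_{i∈V_n} Σ_{j∈V_n} w_{ij}, such that: (i) λ > max( (d̄_p - d̲_n)/(1 + d̄_p - d̲_n), (d̄_n - d̲_p)/(1 + d̄_n - d̲_p) ); (ii) (λ(d̲_p + d̄_n - 1) + d̲_p - d̄_n)/(1 - (1-λ)(d̲_p + d̄_n - 1)) + (1-β)(2d̲_p - 1)/(2β(1-λ)) > 0; and (iii) (λ(d̲_n + d̄_p - 1) + d̲_n - d̄_p)/(1 - (1-λ)(d̲_n + d̄_p - 1)) + (1-β)(2d̲_n - 1)/(2β(1-λ)) > 0. Then the model has a polarized equilibrium z* = (x*, y*) with respect to (V_p, V_n): a state fixed by the update rule for every agent, with x_i* = -1 and y_i* < 0 for all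 i ∈ V_n, and x_j* = +1 and y_j* > 0 for all j ∈ V_p. -/
import Mathlib


open Finset Matrix Filter

/-- The quantity `δ_i(z)` in the simplified model (`A = W`, `α = 0`, `γ = 0`). -/
noncomputable def sDelta {n : ℕ} (w : Fin n → Fin n → ℝ) (lam β : ℝ)
    (x y : Fin n → ℝ) (i : Fin n) : ℝ :=
  2 * lam * β * (1 - lam) * (∑ j, w i j * y j) + (1 - β) * lam * (∑ j, w i j * x j)

/-- `S(d; x_i)`: `+1` if `d > 0`, `-1` if `d < 0`, and `x_i` if `d = 0`. -/
noncomputable def brS (d xi : ℝ) : ℝ := if 0 < d then 1 else if d < 0 then -1 else xi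

/-- A state `(x, y)` is an equilibrium of the simplified coevolutionary model if applying
the update rule to any agent leaves the state unchanged. -/
noncomputable def isEquilibrium {n : ℕ} (w : Fin n → Fin n → ℝ) (lam β : ℝ)
    (x y : Fin n → ℝ) : Prop :=
  ∀ i, brS (sDelta w lam β x y i) (x i) = x i ∧
    (1 - lam) * (∑ j, w i j * y j) + lam * brS (sDelta w lam β x y i) (x i) = y i

/-- A state `(x, y)` is polarized with respect to the partition `(Vp, Vn)`. -/
def Polarized {n : ℕ} (Vp Vn : Finset (Fin n)) (x y : Fin n → ℝ) : Prop :=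
  (∀ i ∈ Vp, x i = 1 ∧ 0 < y i) ∧ (∀ i ∈ Vn, x i = -1 ∧ y i < 0)

/-- A nonnegative matrix (given as a function) is irreducible if for every pair of indices
some power of the matrix has a positive entry there. -/
def FunIrreducible {n : ℕ} (W : Fin n → Fin n → ℝ) : Prop :=
  ∀ i j, ∃ k : ℕ, 0 < ((Matrix.of W) ^ k) i j


/-- Auxiliary lower-bound lemma: if `(a, b)` is a subsolution of the fixed-point
system on the partition `(Vp, Vn)`, then `y` is bounded below by `a` on `Vp`
and by `b` on `Vn`. -/
lemma lbAux {n : ℕ} (w : Fin n → Fin n → ℝ) (lam : ℝ)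
    (hw : ∀ i j, 0 ≤ w i j) (hwrow : ∀ i, ∑ j, w i j = 1)
    (hlam0 : 0 < lam) (hlam1 : lam < 1)
    (Vp Vn : Finset (Fin n)) (hdisj : Disjoint Vp Vn) (hunion : Vp ∪ Vn = Finset.univ)
    (hne : Nonempty (Fin n))
    (a b : ℝ)
    (ha : ∀ i ∈ Vp, a ≤ (1 - lam) * ((∑ j ∈ Vp, w i j) * a + (∑ j ∈ Vn, w i j) * b) + lam)
    (hb : ∀ i ∈ Vn, b ≤ (1 - lam) * ((∑ j ∈ Vn, w i j) * b + (∑ j ∈ Vp, w i j) * a) - lam)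
    (y : Fin n → ℝ)
    (hy : ∀ i, y i = (1 - lam) * (∑ j, w i j * y j) + lam * (if i ∈ Vp then 1 else -1)) :
    ∀ i, (if i ∈ Vp then a else b) ≤ y i := by
  obtain ⟨i0, -, hmin⟩ := Finset.exists_min_image Finset.univ
    (fun i => y i - (if i ∈ Vp then a else b)) ⟨hne.some, Finset.mem_univ _⟩
  have hmin' : ∀ i, y i0 - (if i0 ∈ Vp then a else b) ≤ y i - (if i ∈ Vp then a else b) :=
    fun i => hmin i (Finset.mem_univ i)
  set t := y i0 - (if i0 ∈ Vp then a else b) with htdef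
  have hnotp : ∀ j, j ∉ Vp → j ∈ Vn := by
    intro j hj
    have : j ∈ Vp ∪ Vn := hunion ▸ Finset.mem_univ j
    simpa [hj] using Finset.mem_union.mp this
  have ht : 0 ≤ t := by
    have hsplit : ∑ j, w i0 j * y j = ∑ j ∈ Vp, w i0 j * y j + ∑ j ∈ Vn, w i0 j * y j := by
      rw [← Finset.sum_union hdisj, hunion]
    have hrow : (∑ j ∈ Vp, w i0 j) + (∑ j ∈ Vn, w i0 j) = 1 := by
      rw [← Finset.sum_union hdisj, hunion]; exact hwrow i0
    have hP : (∑ j ∈ Vp, w i0 j) * (a + t) ≤ ∑ j ∈ Vp, w i0 j * y j := by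
      rw [Finset.sum_mul]
      refine Finset.sum_le_sum fun j hj => ?_
      have h := hmin' j
      rw [if_pos hj] at h
      exact mul_le_mul_of_nonneg_left (by linarith) (hw i0 j)
    have hN : (∑ j ∈ Vn, w i0 j) * (b + t) ≤ ∑ j ∈ Vn, w i0 j * y j := by
      rw [Finset.sum_mul]
      refine Finset.sum_le_sum fun j hj => ?_
      have h := hmin' j
      rw [if_neg (Finset.disjoint_right.mp hdisj hj)] at h
      exact mul_le_mul_of_nonneg_left (by linarith) (hw i0 j)
    have hmono : (1 - lam) * ((∑ j ∈ Vp, w i0 j) * (a + t) + (∑ j ∈ Vn, w i0 j) * (b + t))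
        ≤ (1 - lam) * (∑ j, w i0 j * y j) := by
      rw [hsplit]
      exact mul_le_mul_of_nonneg_left (by linarith) (by linarith)
    have hexp : (∑ j ∈ Vp, w i0 j) * (a + t) + (∑ j ∈ Vn, w i0 j) * (b + t)
        = (∑ j ∈ Vp, w i0 j) * a + (∑ j ∈ Vn, w i0 j) * b + t := by
      linear_combination t * hrow
    rw [hexp] at hmono
    by_cases hi0 : i0 ∈ Vp
    · have h1 := hy i0
      rw [if_pos hi0] at h1
      have h2 := ha i0 hi0
      rw [if_pos hi0] at htdef
      nlinarith [hmono, h1, h2, hlam0]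
    · have h1 := hy i0
      rw [if_neg hi0] at h1
      have h2 := hb i0 (hnotp i0 hi0)
      rw [if_neg hi0] at htdef
      nlinarith [hmono, h1, h2, hlam0]
  intro i
  have := hmin' i
  linarith
set_option maxHeartbeats 10000000 in
theorem stmt13 {n : ℕ} (hn : 2 ≤ n) (w : Fin n → Fin n → ℝ) (lam β : ℝ)
    (hw : ∀ i j, 0 ≤ w i j) (hwrow : ∀ i, ∑ j, w i j = 1)
    (hwsymm : ∀ i j, w i j = w j i) (hwirr : FunIrreducible w)
    (hwdiag : ∀ i, 0 < w i i)
    (hlam : lam ∈ Set.Ioo (0 : ℝ) 1) (hβ : β ∈ Set.Ioo (0 : ℝ) 1)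
    -- a partition of the agents into two nonempty disjoint sets
    (Vp Vn : Finset (Fin n)) (hdisj : Disjoint Vp Vn) (hunion : Vp ∪ Vn = Finset.univ)
    (hVp : Vp.Nonempty) (hVn : Vn.Nonempty)
    (dplo dphi dnlo dnhi : ℝ)
    (hdplo : dplo = Vp.inf' hVp fun i => ∑ j ∈ Vp, w i j)
    (hdphi : dphi = Vp.sup' hVp fun i => ∑ j ∈ Vp, w i j)
    (hdnlo : dnlo = Vn.inf' hVn fun i => ∑ j ∈ Vn, w i j)
    (hdnhi : dnhi = Vn.sup' hVn fun i => ∑ j ∈ Vn, w i j)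
    -- condition (i)
    (hcond1 : lam > max ((dphi - dnlo) / (1 + dphi - dnlo))
      ((dnhi - dplo) / (1 + dnhi - dplo)))
    -- condition (ii)
    (hcond2 : (lam * (dplo + dnhi - 1) + dplo - dnhi) /
        (1 - (1 - lam) * (dplo + dnhi - 1)) +
        (1 - β) * (2 * dplo - 1) / (2 * β * (1 - lam)) > 0)
    -- condition (iii)
    (hcond3 : (lam * (dnlo + dphi - 1) + dnlo - dphi) /
        (1 - (1 - lam) * (dnlo + dphi - 1)) +
        (1 - β) * (2 * dnlo - 1) / (2 * β * (1 - lam)) > 0) :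
    ∃ xstar ystar : Fin n → ℝ, (∀ i, ystar i ∈ Set.Icc (-1 : ℝ) 1) ∧
      isEquilibrium w lam β xstar ystar ∧ Polarized Vp Vn xstar ystar := by
  obtain ⟨hlam0, hlam1⟩ := hlam
  obtain ⟨hβ0, hβ1⟩ := hβ
  have h1lam : 0 < 1 - lam := by linarith
  have h1β : 0 < 1 - β := by linarith
  have hne : Nonempty (Fin n) := ⟨⟨0, by omega⟩⟩
  -- the action vector
  set x : Fin n → ℝ := fun i => if i ∈ Vp then 1 else -1 with hxdef
  have hxp : ∀ i ∈ Vp, x i = 1 := fun i hi => if_pos hi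
  have hnotp : ∀ j, j ∉ Vp → j ∈ Vn := by
    intro j hj
    have : j ∈ Vp ∪ Vn := hunion ▸ Finset.mem_univ j
    simpa [hj] using Finset.mem_union.mp this
  have hVnVp : ∀ j ∈ Vn, j ∉ Vp := fun j hj => Finset.disjoint_right.mp hdisj hj
  have hxn : ∀ i ∈ Vn, x i = -1 := fun i hi => if_neg (hVnVp i hi)
  -- existence of the opinion vector
  have hexy : ∃ y : Fin n → ℝ, ∀ i, y i = (1 - lam) * (∑ j, w i j * y j) + lam * x i := by
    have hsmul : ∀ (c : ℝ) (v : Fin n → ℝ) (i : Fin n),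
        ∑ j, w i j * (c * v j) = c * ∑ j, w i j * v j := by
      intro c v i
      rw [Finset.mul_sum]
      exact Finset.sum_congr rfl fun j _ => by ring
    let L : (Fin n → ℝ) →ₗ[ℝ] (Fin n → ℝ) :=
      { toFun := fun v i => v i - (1 - lam) * ∑ j, w i j * v j
        map_add' := by
          intro u v
          funext i
          simp only [Pi.add_apply, mul_add, Finset.sum_add_distrib]
          ring
        map_smul' := by
          intro c v
          funext i
          simp only [Pi.smul_apply, smul_eq_mul, RingHom.id_apply]
          rw [hsmul]
          ring }
    have hinj : Function.Injective L := by
      rw [← LinearMap.ker_eq_bot, LinearMap.ker_eq_bot']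
      intro v hv
      have hv' : ∀ i, v i = (1 - lam) * ∑ j, w i j * v j := by
        intro i
        have h := congrFun hv i
        simp only [L, LinearMap.coe_mk, AddHom.coe_mk, Pi.zero_apply] at h
        linarith
      obtain ⟨i0, -, hmax⟩ := Finset.exists_max_image Finset.univ
        (fun i => |v i|) ⟨hne.some, Finset.mem_univ _⟩
      have hb : |∑ j, w i0 j * v j| ≤ |v i0| := by
        calc |∑ j, w i0 j * v j| ≤ ∑ j, |w i0 j * v j| := Finset.abs_sum_le_sum_abs _ _
          _ ≤ ∑ j, w i0 j * |v i0| := by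
              refine Finset.sum_le_sum fun j _ => ?_
              rw [abs_mul, abs_of_nonneg (hw i0 j)]
              exact mul_le_mul_of_nonneg_left (hmax j (Finset.mem_univ j)) (hw i0 j)
          _ = |v i0| := by rw [← Finset.sum_mul, hwrow, one_mul]
      have h0 : |v i0| ≤ (1 - lam) * |v i0| := by
        calc |v i0| = (1 - lam) * |∑ j, w i0 j * v j| := by
              rw [hv' i0, abs_mul, abs_of_nonneg h1lam.le]
          _ ≤ (1 - lam) * |v i0| := mul_le_mul_of_nonneg_left hb h1lam.le
      have hz : |v i0| = 0 := by
        have hle : |v i0| ≤ 0 := by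
          have hml : lam * |v i0| ≤ lam * 0 := by linarith
          exact le_of_mul_le_mul_left hml hlam0
        linarith [abs_nonneg (v i0)]
      funext i
      have := hmax i (Finset.mem_univ i)
      rw [hz] at this
      simpa using abs_nonpos_iff.mp (by linarith [abs_nonneg (v i)])
    obtain ⟨y, hy0⟩ := (LinearMap.injective_iff_surjective).mp hinj (fun i => lam * x i)
    refine ⟨y, fun i => ?_⟩
    have h := congrFun hy0 i
    simp only [L, LinearMap.coe_mk, AddHom.coe_mk] at h
    linarith
  obtain ⟨y, hy⟩ := hexy
  -- basic facts about the degree quantities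
  have hsumle1 : ∀ (V' : Finset (Fin n)) (i : Fin n), ∑ j ∈ V', w i j ≤ 1 := by
    intro V' i
    rw [← hwrow i]
    exact Finset.sum_le_sum_of_subset_of_nonneg (Finset.subset_univ _) fun j _ _ => hw i j
  have hsumpos : ∀ (V' : Finset (Fin n)) (i : Fin n), i ∈ V' → 0 < ∑ j ∈ V', w i j :=
    fun V' i hi => lt_of_lt_of_le (hwdiag i) (Finset.single_le_sum (fun j _ => hw i j) hi)
  have hrowsplit : ∀ i : Fin n, (∑ j ∈ Vp, w i j) + (∑ j ∈ Vn, w i j) = 1 := by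
    intro i
    rw [← Finset.sum_union hdisj, hunion]
    exact hwrow i
  have hdplo_le : ∀ i ∈ Vp, dplo ≤ ∑ j ∈ Vp, w i j := by
    intro i hi; rw [hdplo]; exact Finset.inf'_le _ hi
  have hdphi_ge : ∀ i ∈ Vp, (∑ j ∈ Vp, w i j) ≤ dphi := by
    intro i hi; rw [hdphi]; exact Finset.le_sup' (fun i => ∑ j ∈ Vp, w i j) hi
  have hdnlo_le : ∀ i ∈ Vn, dnlo ≤ ∑ j ∈ Vn, w i j := by
    intro i hi; rw [hdnlo]; exact Finset.inf'_le _ hi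
  have hdnhi_ge : ∀ i ∈ Vn, (∑ j ∈ Vn, w i j) ≤ dnhi := by
    intro i hi; rw [hdnhi]; exact Finset.le_sup' (fun i => ∑ j ∈ Vn, w i j) hi
  have hdplo_pos : 0 < dplo := by
    rw [hdplo]; exact (Finset.lt_inf'_iff hVp).mpr fun i hi => hsumpos Vp i hi
  have hdnlo_pos : 0 < dnlo := by
    rw [hdnlo]; exact (Finset.lt_inf'_iff hVn).mpr fun i hi => hsumpos Vn i hi
  have hdplo_le1 : dplo ≤ 1 := by
    obtain ⟨i, hi⟩ := hVp
    exact le_trans (hdplo_le i hi) (hsumle1 Vp i)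
  have hdnlo_le1 : dnlo ≤ 1 := by
    obtain ⟨i, hi⟩ := hVn
    exact le_trans (hdnlo_le i hi) (hsumle1 Vn i)
  have hdphi_le1 : dphi ≤ 1 := by
    rw [hdphi]; exact Finset.sup'_le _ _ fun i _ => hsumle1 Vp i
  have hdnhi_le1 : dnhi ≤ 1 := by
    rw [hdnhi]; exact Finset.sup'_le _ _ fun i _ => hsumle1 Vn i
  have hdphi_pos : 0 < dphi := by
    obtain ⟨i, hi⟩ := hVp
    exact lt_of_lt_of_le (hsumpos Vp i hi) (hdphi_ge i hi)
  have hdnhi_pos : 0 < dnhi := by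
    obtain ⟨i, hi⟩ := hVn
    exact lt_of_lt_of_le (hsumpos Vn i hi) (hdnhi_ge i hi)
  -- denominators of the fixed-point formulas
  have hD : 0 < 1 - (1 - lam) * (dplo + dnhi - 1) := by
    have := mul_le_mul_of_nonneg_left (show dplo + dnhi - 1 ≤ 1 by linarith) h1lam.le
    linarith
  have hD' : 0 < 1 - (1 - lam) * (dphi + dnlo - 1) := by
    have := mul_le_mul_of_nonneg_left (show dphi + dnlo - 1 ≤ 1 by linarith) h1lam.le
    linarith
  -- condition (i) in linear form
  obtain ⟨hc1a, hc1b⟩ := max_lt_iff.mp hcond1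
  have hden1 : 0 < 1 + dphi - dnlo := by linarith
  have hden2 : 0 < 1 + dnhi - dplo := by linarith
  have h1a : dphi - dnlo < lam * (1 + dphi - dnlo) := (div_lt_iff₀ hden1).mp hc1a
  have h1b : dnhi - dplo < lam * (1 + dnhi - dplo) := (div_lt_iff₀ hden2).mp hc1b
  have hnum_a : 0 < lam + (1 - lam) * (dplo - dnhi) := by linarith [h1b]
  have hnum_A : 0 < lam - (1 - lam) * (dphi - dnlo) := by linarith [h1a]
  -- the fixed-point constants
  set astar : ℝ := (lam + (1 - lam) * (dplo - dnhi)) / (1 - (1 - lam) * (dplo + dnhi - 1))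
    with hastar
  set bstar : ℝ := astar - 2 * lam / (1 - (1 - lam) * (dplo + dnhi - 1)) with hbstar
  set Astar : ℝ := (lam + (1 - lam) * (dphi - dnlo)) / (1 - (1 - lam) * (dphi + dnlo - 1))
    with hAstar
  set Bstar : ℝ := Astar - 2 * lam / (1 - (1 - lam) * (dphi + dnlo - 1)) with hBstar
  clear_value Bstar
  clear_value Astar
  clear_value bstar
  clear_value astar
  have hastar_pos : 0 < astar := by rw [hastar]; exact div_pos hnum_a hD
  have hBeq : Bstar = ((1 - lam) * (dphi - dnlo) - lam) / (1 - (1 - lam) * (dphi + dnlo - 1)) := by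
    rw [hBstar, hAstar]
    field_simp
    ring
  have hBstar_neg : Bstar < 0 := by
    rw [hBeq]
    exact div_neg_of_neg_of_pos (by linarith) hD'
  have hab : bstar ≤ astar := by
    rw [hbstar]
    have : 0 < 2 * lam / (1 - (1 - lam) * (dplo + dnhi - 1)) := by positivity
    linarith
  have hAB : Bstar ≤ Astar := by
    rw [hBstar]
    have : 0 < 2 * lam / (1 - (1 - lam) * (dphi + dnlo - 1)) := by positivity
    linarith
  -- the defining identities of the fixed-point constants
  have ida : astar = (1 - lam) * (dplo * astar + (1 - dplo) * bstar) + lam := by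
    rw [hbstar, hastar]
    field_simp
    ring
  have idb : bstar = (1 - lam) * (dnhi * bstar + (1 - dnhi) * astar) - lam := by
    rw [hbstar, hastar]
    field_simp
    ring
  have idA : Astar = (1 - lam) * (dphi * Astar + (1 - dphi) * Bstar) + lam := by
    rw [hBstar, hAstar]
    field_simp
    ring
  have idB : Bstar = (1 - lam) * (dnlo * Bstar + (1 - dnlo) * Astar) - lam := by
    rw [hBstar, hAstar]
    field_simp
    ring
  -- lower bounds on y
  have hlb : ∀ i, (if i ∈ Vp then astar else bstar) ≤ y i := by
    refine lbAux w lam hw hwrow hlam0 hlam1 Vp Vn hdisj hunion hne astar bstar ?_ ?_ y hy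
    · intro i hi
      have hd := hdplo_le i hi
      have hSn : (∑ j ∈ Vn, w i j) = 1 - ∑ j ∈ Vp, w i j := by linarith [hrowsplit i]
      have hprod : 0 ≤ (1 - lam) * (((∑ j ∈ Vp, w i j) - dplo) * (astar - bstar)) :=
        mul_nonneg h1lam.le (mul_nonneg (by linarith) (by linarith))
      rw [hSn]
      linarith [ida, hprod]
    · intro i hi
      have he := hdnhi_ge i hi
      have hSp : (∑ j ∈ Vp, w i j) = 1 - ∑ j ∈ Vn, w i j := by linarith [hrowsplit i]
      have hprod : 0 ≤ (1 - lam) * ((dnhi - (∑ j ∈ Vn, w i j)) * (astar - bstar)) :=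
        mul_nonneg h1lam.le (mul_nonneg (by linarith) (by linarith))
      rw [hSp]
      linarith [idb, hprod]
  -- upper bounds on y (via the reflected system)
  have hub : ∀ i, (if i ∈ Vn then -Bstar else -Astar) ≤ -y i := by
    refine lbAux w lam hw hwrow hlam0 hlam1 Vn Vp hdisj.symm
      (by rw [Finset.union_comm]; exact hunion) hne (-Bstar) (-Astar) ?_ ?_
      (fun i => -y i) ?_
    · intro i hi
      have he := hdnlo_le i hi
      have hSp : (∑ j ∈ Vp, w i j) = 1 - ∑ j ∈ Vn, w i j := by linarith [hrowsplit i]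
      have hprod : 0 ≤ (1 - lam) * (((∑ j ∈ Vn, w i j) - dnlo) * (Astar - Bstar)) :=
        mul_nonneg h1lam.le (mul_nonneg (by linarith) (by linarith))
      rw [hSp]
      linarith [idB, hprod]
    · intro i hi
      have hd := hdphi_ge i hi
      have hSn : (∑ j ∈ Vn, w i j) = 1 - ∑ j ∈ Vp, w i j := by linarith [hrowsplit i]
      have hprod : 0 ≤ (1 - lam) * ((dphi - (∑ j ∈ Vp, w i j)) * (Astar - Bstar)) :=
        mul_nonneg h1lam.le (mul_nonneg (by linarith) (by linarith))
      rw [hSn]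
      linarith [idA, hprod]
    · intro i
      show -y i = (1 - lam) * (∑ j, w i j * -y j) + lam * (if i ∈ Vn then (1:ℝ) else -1)
      have hsn : ∑ j, w i j * -y j = -∑ j, w i j * y j := by
        rw [← Finset.sum_neg_distrib]
        exact Finset.sum_congr rfl fun j _ => by ring
      rw [hsn]
      by_cases hi : i ∈ Vp
      · rw [if_neg (Finset.disjoint_left.mp hdisj hi)]
        have h := hy i
        rw [hxp i hi] at h
        linarith
      · rw [if_pos (hnotp i hi)]
        have h := hy i
        rw [hxn i (hnotp i hi)] at h
        linarith
  have hylbp : ∀ i ∈ Vp, astar ≤ y i := by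
    intro i hi
    have := hlb i
    rwa [if_pos hi] at this
  have hyubn : ∀ i ∈ Vn, y i ≤ Bstar := by
    intro i hi
    have := hub i
    rw [if_pos hi] at this
    linarith
  have hyubp : ∀ i ∈ Vp, y i ≤ Astar := by
    intro i hi
    have := hub i
    rw [if_neg (Finset.disjoint_left.mp hdisj hi)] at this
    linarith
  have hylbn : ∀ i ∈ Vn, bstar ≤ y i := by
    intro i hi
    have := hlb i
    rwa [if_neg (hVnVp i hi)] at this
  -- y is bounded by 1 in absolute value
  have hxle : ∀ i, x i ≤ 1 := by
    intro i
    rw [hxdef]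
    by_cases hi : i ∈ Vp <;> simp [hi]
  have hxge : ∀ i, -1 ≤ x i := by
    intro i
    rw [hxdef]
    by_cases hi : i ∈ Vp <;> simp [hi]
  have hyle1 : ∀ i, y i ≤ 1 := by
    obtain ⟨iM, -, hM⟩ := Finset.exists_max_image Finset.univ y ⟨hne.some, Finset.mem_univ _⟩
    have hs : ∑ j, w iM j * y j ≤ y iM := by
      calc ∑ j, w iM j * y j ≤ ∑ j, w iM j * y iM :=
            Finset.sum_le_sum fun j _ => mul_le_mul_of_nonneg_left (hM j (Finset.mem_univ j)) (hw iM j)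
        _ = y iM := by rw [← Finset.sum_mul, hwrow, one_mul]
      
    have h1 : y iM ≤ 1 := by
      have h := hy iM
      have hm1 := mul_le_mul_of_nonneg_left hs h1lam.le
      have hm2 : lam * x iM ≤ lam * 1 := mul_le_mul_of_nonneg_left (hxle iM) hlam0.le
      have hml : lam * y iM ≤ lam * 1 := by linarith
      exact le_of_mul_le_mul_left hml hlam0
    intro i
    exact le_trans (hM i (Finset.mem_univ i)) h1
  have hyge1 : ∀ i, -1 ≤ y i := by
    obtain ⟨im, -, hm⟩ := Finset.exists_min_image Finset.univ y ⟨hne.some, Finset.mem_univ _⟩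
    have hs : y im ≤ ∑ j, w im j * y j := by
      calc y im = ∑ j, w im j * y im := by rw [← Finset.sum_mul, hwrow, one_mul]
        _ ≤ ∑ j, w im j * y j :=
            Finset.sum_le_sum fun j _ => mul_le_mul_of_nonneg_left (hm j (Finset.mem_univ j)) (hw im j)
    have h1 : -1 ≤ y im := by
      have h := hy im
      have hm1 := mul_le_mul_of_nonneg_left hs h1lam.le
      have hm2 : lam * (-1) ≤ lam * x im := mul_le_mul_of_nonneg_left (hxge im) hlam0.le
      have hml : lam * (-1) ≤ lam * y im := by linarith
      exact le_of_mul_le_mul_left hml hlam0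
    intro i
    exact le_trans h1 (hm i (Finset.mem_univ i))
  -- delta computation
  have hswx : ∀ i, ∑ j, w i j * x j = 2 * (∑ j ∈ Vp, w i j) - 1 := by
    intro i
    have hsplit : ∑ j, w i j * x j = ∑ j ∈ Vp, w i j * x j + ∑ j ∈ Vn, w i j * x j := by
      rw [← Finset.sum_union hdisj, hunion]
    have e1 : ∑ j ∈ Vp, w i j * x j = ∑ j ∈ Vp, w i j :=
      Finset.sum_congr rfl fun j hj => by rw [hxp j hj, mul_one]
    have e2 : ∑ j ∈ Vn, w i j * x j = -∑ j ∈ Vn, w i j := by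
      rw [← Finset.sum_neg_distrib]
      exact Finset.sum_congr rfl fun j hj => by rw [hxn j hj]; ring
    have hr := hrowsplit i
    rw [hsplit, e1, e2]
    linarith
  have hdelta : ∀ i, sDelta w lam β x y i
      = 2 * lam * β * (y i - lam * x i) + (1 - β) * lam * (2 * (∑ j ∈ Vp, w i j) - 1) := by
    intro i
    have hswy : (1 - lam) * (∑ j, w i j * y j) = y i - lam * x i := by
      have := hy i
      linarith
    unfold sDelta
    rw [hswx i]
    linear_combination (2 * lam * β) * hswy
  -- the key positivity from condition (ii)
  have hden3 : (0:ℝ) < 2 * β * (1 - lam) := by positivity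
  have key2 : 0 < 2 * lam * β * (astar - lam) + (1 - β) * lam * (2 * dplo - 1) := by
    have h := hcond2
    rw [div_add_div _ _ (ne_of_gt hD) (ne_of_gt hden3)] at h
    have hdd : (0:ℝ) < (1 - (1 - lam) * (dplo + dnhi - 1)) * (2 * β * (1 - lam)) :=
      mul_pos hD hden3
    have hnum := mul_pos h hdd
    rw [div_mul_cancel₀ _ (ne_of_gt hdd)] at hnum
    have ha_l : astar * (1 - (1 - lam) * (dplo + dnhi - 1))
        = lam + (1 - lam) * (dplo - dnhi) := by
      rw [hastar]
      exact div_mul_cancel₀ _ (ne_of_gt hD)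
    have hkey_eq : (1 - (1 - lam) * (dplo + dnhi - 1)) *
          (2 * lam * β * (astar - lam) + (1 - β) * lam * (2 * dplo - 1))
        = lam * ((lam * (dplo + dnhi - 1) + dplo - dnhi) * (2 * β * (1 - lam)) +
            (1 - (1 - lam) * (dplo + dnhi - 1)) * ((1 - β) * (2 * dplo - 1))) := by
      linear_combination (2 * lam * β) * ha_l
    have hfin : 0 < (1 - (1 - lam) * (dplo + dnhi - 1)) *
        (2 * lam * β * (astar - lam) + (1 - β) * lam * (2 * dplo - 1)) := by
      rw [hkey_eq]
      exact mul_pos hlam0 hnum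
    rcases mul_pos_iff.mp hfin with ⟨-, h⟩ | ⟨h1, -⟩
    · exact h
    · linarith
  have key3 : 0 < 2 * lam * β * (-Bstar - lam) + (1 - β) * lam * (2 * dnlo - 1) := by
    have hD0 : 0 < 1 - (1 - lam) * (dnlo + dphi - 1) := by linarith [hD']
    have h := hcond3
    rw [div_add_div _ _ (ne_of_gt hD0) (ne_of_gt hden3)] at h
    have hdd : (0:ℝ) < (1 - (1 - lam) * (dnlo + dphi - 1)) * (2 * β * (1 - lam)) :=
      mul_pos hD0 hden3
    have hnum := mul_pos h hdd
    rw [div_mul_cancel₀ _ (ne_of_gt hdd)] at hnum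
    have hB_l : Bstar * (1 - (1 - lam) * (dphi + dnlo - 1))
        = (1 - lam) * (dphi - dnlo) - lam := by
      rw [hBeq]
      exact div_mul_cancel₀ _ (ne_of_gt hD')
    have hkey_eq : (1 - (1 - lam) * (dnlo + dphi - 1)) *
          (2 * lam * β * (-Bstar - lam) + (1 - β) * lam * (2 * dnlo - 1))
        = lam * ((lam * (dnlo + dphi - 1) + dnlo - dphi) * (2 * β * (1 - lam)) +
            (1 - (1 - lam) * (dnlo + dphi - 1)) * ((1 - β) * (2 * dnlo - 1))) := by
      linear_combination (-(2 * lam * β)) * hB_l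
    have hD'' : 0 < 1 - (1 - lam) * (dnlo + dphi - 1) := by linarith [hD']
    have hfin : 0 < (1 - (1 - lam) * (dnlo + dphi - 1)) *
        (2 * lam * β * (-Bstar - lam) + (1 - β) * lam * (2 * dnlo - 1)) := by
      rw [hkey_eq]
      exact mul_pos hlam0 hnum
    rcases mul_pos_iff.mp hfin with ⟨-, h⟩ | ⟨h1, -⟩
    · exact h
    · linarith
  -- sign of delta on each part
  have hdp : ∀ i ∈ Vp, 0 < sDelta w lam β x y i := by
    intro i hi
    rw [hdelta i, hxp i hi]
    have p1 : 0 ≤ 2 * lam * β * (y i - astar) :=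
      mul_nonneg (by positivity) (by linarith [hylbp i hi])
    have p2 : 0 ≤ (1 - β) * lam * (2 * (∑ j ∈ Vp, w i j) - 2 * dplo) :=
      mul_nonneg (mul_nonneg h1β.le hlam0.le) (by linarith [hdplo_le i hi])
    linarith [key2, p1, p2]
  have hdn : ∀ i ∈ Vn, sDelta w lam β x y i < 0 := by
    intro i hi
    rw [hdelta i, hxn i hi,
      show (∑ j ∈ Vp, w i j) = 1 - ∑ j ∈ Vn, w i j from by linarith [hrowsplit i]]
    have p1 : 0 ≤ 2 * lam * β * (Bstar - y i) :=
      mul_nonneg (by positivity) (by linarith [hyubn i hi])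
    have p2 : 0 ≤ (1 - β) * lam * (2 * (∑ j ∈ Vn, w i j) - 2 * dnlo) :=
      mul_nonneg (mul_nonneg h1β.le hlam0.le) (by linarith [hdnlo_le i hi])
    linarith [key3, p1, p2]
  -- conclusion
  refine ⟨x, y, fun i => ⟨hyge1 i, hyle1 i⟩, ?_, ?_, ?_⟩
  · intro i
    by_cases hi : i ∈ Vp
    · have hbr : brS (sDelta w lam β x y i) (x i) = x i := by
        unfold brS
        rw [if_pos (hdp i hi), hxp i hi]
      refine ⟨hbr, ?_⟩
      rw [hbr]
      linarith [hy i]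
    · have hin := hnotp i hi
      have hbr : brS (sDelta w lam β x y i) (x i) = x i := by
        unfold brS
        rw [if_neg (asymm (hdn i hin)), if_pos (hdn i hin), hxn i hin]
      refine ⟨hbr, ?_⟩
      rw [hbr]
      linarith [hy i]
  · intro i hi
    exact ⟨hxp i hi, lt_of_lt_of_le hastar_pos (hylbp i hi)⟩
  · intro i hi
    exact ⟨hxn i hi, lt_of_le_of_lt (hyubn i hi) hBstar_neg⟩
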